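/- arXiv:1805.06703 — 2 statements merged into one kernel-verified Lean document; each statement's English description precedes it below -/
import Mathlib

section
/- Reverse Poincaré inequality for discrete super Ricci flows: Let (X,Q_t,π_t)_{t∈I} be a regular time-dependent Markov triple satisfying the gradient estimate on I: for all r₁≤r₂ in I, every solution χ of the heat equation on [r₁,r₂] and every solution σ of the adjoint heat equation on [r₁,r₂] with σ(r₂,·)∈P(X), Γ_{r₂}(σ(r₂,·),χ(r₂,·)) ≤ Γ_{r₁}(σ(r₁,·),χ(r₁,·)). Then for all s≤t in I, every μ∈P(X) and every ψ̄∈ℝ^X: letting ψ be the solution of the heat equation on [s,t] with ψ(s,·)=ψ̄ and χ the solution of the heat equation on [s,t] with χ(s,x)=ψ̄(x)² for all x, one has ∑_x χ(t,x)μ(x) - ∑_x ψ(t,x)²μ(x) ≥ 2(t-s)·Γ_t(μ,ψ(t,·)). -/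
/-!
Transport `μ` backwards from time `t` by the adjoint heat flow `σ`; it exists by Picard–Lindelöf
and stays nonnegative by the discrete minimum principle. Put `F r = ∑ₓ (χ r x - (ψ r x)²) σ r x`,
so that `F s = 0` and `F t` is the left-hand side. By the duality of `Δ` and `Δ̂`,
`F' r = ∑ₓ ∑ᵧ Q r x y (ψ r y - ψ r x)² σ r x`, which is at least `2 Γ_r(σ r, ψ r)` because the
logarithmic mean lies below the arithmetic mean, hence at least `2 Γ_t(μ, ψ t)` by the gradient
estimate. Integrating from `s` to `t` gives the inequality.
-/

open Filter Set MeasureTheory Topology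
open scoped ENNReal NNReal

noncomputable section

variable {X : Type*}

/-- Discrete Laplacian. -/
def lapOp [Fintype X] (Q : X → X → ℝ) (f : X → ℝ) (x : X) : ℝ :=
  ∑ y, Q x y * (f y - f x)

/-- Adjoint discrete Laplacian. -/
def adjLapOp [Fintype X] (Q : X → X → ℝ) (f : X → ℝ) (x : X) : ℝ :=
  ∑ y, (Q y x * f y - Q x y * f x)

/-- Markov triple: nonneg off-diagonal rates, diagonal convention, irreducibility,
strictly positive reversible probability measure. -/
def IsMarkovTriple [Fintype X] [DecidableEq X] (Q : X → X → ℝ) (pm : X → ℝ) : Prop :=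
  (∀ x y : X, x ≠ y → 0 ≤ Q x y) ∧
  (∀ x : X, Q x x = -∑ y ∈ ({x} : Finset X)ᶜ, Q x y) ∧
  (∀ x y : X, Relation.ReflTransGen (fun a b => a ≠ b ∧ 0 < Q a b) x y) ∧
  (∀ x, 0 < pm x) ∧ (∑ x, pm x = 1) ∧
  (∀ x y, Q x y * pm x = Q y x * pm y)

/-- Locally Lipschitz on a set. -/
def LocLipschitzOn (f : ℝ → ℝ) (I : Set ℝ) : Prop :=
  ∀ t ∈ I, ∃ ε > 0, ∃ K : ℝ≥0, LipschitzOnWith K f (I ∩ Metric.ball t ε)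

/-- Regular time-dependent Markov triple on `I`. -/
def IsRegularTriple [Fintype X] [DecidableEq X] (I : Set ℝ)
    (Q : ℝ → X → X → ℝ) (pm : ℝ → X → ℝ) : Prop :=
  (∀ t ∈ I, IsMarkovTriple (Q t) (pm t)) ∧
  (∀ x y : X, x ≠ y → (∀ t ∈ I, Q t x y = 0) ∨
    ((∀ t ∈ I, 0 < Q t x y) ∧ LocLipschitzOn (fun t => Real.log (Q t x y)) I)) ∧
  (∀ x : X, LocLipschitzOn (fun t => pm t x) I)

/-- Solution of the heat equation on `[s,t]`. -/
def IsHeatSol [Fintype X] (Q : ℝ → X → X → ℝ) (s t : ℝ) (ψ : ℝ → X → ℝ) : Prop :=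
  (∀ x, ContinuousOn (fun r => ψ r x) (Icc s t)) ∧
  (∀ r ∈ Ioo s t, ∀ x, HasDerivAt (fun u => ψ u x) (lapOp (Q r) (ψ r) x) r)

/-- Solution of the adjoint heat equation on `[s,t]`. -/
def IsAdjHeatSol [Fintype X] (Q : ℝ → X → X → ℝ) (s t : ℝ) (σ : ℝ → X → ℝ) : Prop :=
  (∀ x, ContinuousOn (fun r => σ r x) (Icc s t)) ∧
  (∀ r ∈ Ioo s t, ∀ x, HasDerivAt (fun u => σ u x) (-adjLapOp (Q r) (σ r) x) r)

/-- Probability vector. -/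
def IsProb [Fintype X] (μ : X → ℝ) : Prop := (∀ x, 0 ≤ μ x) ∧ ∑ x, μ x = 1

/-- Strictly positive probability vector. -/
def IsProbPos [Fintype X] (μ : X → ℝ) : Prop := (∀ x, 0 < μ x) ∧ ∑ x, μ x = 1

/-- Logarithmic mean `Λ(a,b) = ∫_0^1 a^u b^(1-u) du`. -/
def logMean (a b : ℝ) : ℝ := ∫ u in (0:ℝ)..(1:ℝ), a ^ u * b ^ (1 - u)

/-- Partial derivative of the logarithmic mean in the first variable. -/
def logMeanD1 (a b : ℝ) : ℝ := deriv (fun u => logMean u b) a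

/-- Partial derivative of the logarithmic mean in the second variable. -/
def logMeanD2 (a b : ℝ) : ℝ := deriv (fun u => logMean a u) b

/-- Integrated carré du champ operator `Γ(μ,ψ)`. -/
def gammaOp [Fintype X] (Q : X → X → ℝ) (μ f : X → ℝ) : ℝ :=
  (1/2) * ∑ x, ∑ y, (f y - f x) ^ 2 * logMean (μ x * Q x y) (μ y * Q y x)

section DiscreteCalculus

variable [Fintype X]

theorem sum_lapOp_mul (Q : X → X → ℝ) (f g : X → ℝ) :
    ∑ x, lapOp Q f x * g x = ∑ x, f x * adjLapOp Q g x := by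
  simp only [lapOp, adjLapOp, Finset.sum_mul, Finset.mul_sum, mul_sub, sub_mul,
    Finset.sum_sub_distrib]
  rw [Finset.sum_comm (f := fun x y => Q x y * f y * g x)]
  congr 1 <;> simp only [mul_comm, mul_left_comm]

theorem lapOp_sq_sub_two_mul (Q : X → X → ℝ) (f : X → ℝ) (x : X) :
    lapOp Q (fun z => f z ^ 2) x - 2 * f x * lapOp Q f x = ∑ y, Q x y * (f y - f x) ^ 2 := by
  simp only [lapOp, Finset.mul_sum, ← Finset.sum_sub_distrib]
  exact Finset.sum_congr rfl fun y _ => by ring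

theorem hasDerivAt_sum_sub_sq_mul {Q : X → X → ℝ} {χ ψ σ : ℝ → X → ℝ} {r : ℝ}
    (hχ : ∀ x, HasDerivAt (χ · x) (lapOp Q (χ r) x) r)
    (hψ : ∀ x, HasDerivAt (ψ · x) (lapOp Q (ψ r) x) r)
    (hσ : ∀ x, HasDerivAt (σ · x) (-adjLapOp Q (σ r) x) r) :
    HasDerivAt (fun u => ∑ x, (χ u x - ψ u x ^ 2) * σ u x)
      (∑ x, ∑ y, Q x y * (ψ r y - ψ r x) ^ 2 * σ r x) r := by
  refine (HasDerivAt.fun_sum fun x _ =>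
    ((hχ x).fun_sub ((hψ x).fun_pow 2)).fun_mul (hσ x)).congr_deriv ?_
  calc _ = (∑ x, lapOp Q (χ r) x * σ r x - ∑ x, χ r x * adjLapOp Q (σ r) x)
        + (∑ x, ψ r x ^ 2 * adjLapOp Q (σ r) x - ∑ x, 2 * ψ r x * lapOp Q (ψ r) x * σ r x) := by
        simp only [← Finset.sum_sub_distrib, ← Finset.sum_add_distrib]
        exact Finset.sum_congr rfl fun x _ => by push_cast; ring
    _ = ∑ x, (lapOp Q (fun z => ψ r z ^ 2) x - 2 * ψ r x * lapOp Q (ψ r) x) * σ r x := by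
        rw [sum_lapOp_mul, sub_self, zero_add, ← sum_lapOp_mul Q (fun z => ψ r z ^ 2),
          ← Finset.sum_sub_distrib]
        exact Finset.sum_congr rfl fun x _ => by ring
    _ = _ := by simp only [lapOp_sq_sub_two_mul, Finset.sum_mul]

theorem logMean_le_add_div_two {a b : ℝ} (ha : 0 ≤ a) (hb : 0 ≤ b) :
    logMean a b ≤ (a + b) / 2 := by
  by_cases hint : IntervalIntegrable (fun u : ℝ => a ^ u * b ^ (1 - u)) volume 0 1
  · have hmean : ∫ u in (0:ℝ)..1, (u * a + (1 - u) * b) = (a + b) / 2 := by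
      rw [intervalIntegral.integral_add, intervalIntegral.integral_mul_const,
        intervalIntegral.integral_mul_const, intervalIntegral.integral_comp_sub_left (fun u => u),
        sub_self, sub_zero, integral_id]
      · ring
      all_goals exact (by fun_prop : Continuous _).intervalIntegrable _ _
    rw [logMean, ← hmean]
    refine intervalIntegral.integral_mono_on zero_le_one hint
      (Continuous.intervalIntegrable (by fun_prop) _ _) fun u hu => ?_
    exact Real.geom_mean_le_arith_mean2_weighted hu.1 (by linarith [hu.2]) ha hb (by ring)
  · rw [logMean, intervalIntegral.integral_undef hint]
    positivity

theorem two_mul_gammaOp_le (Q : X → X → ℝ) (hQ : ∀ x y, x ≠ y → 0 ≤ Q x y) {σ : X → ℝ}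
    (hσ : ∀ x, 0 ≤ σ x) (f : X → ℝ) :
    2 * gammaOp Q σ f ≤ ∑ x, ∑ y, Q x y * (f y - f x) ^ 2 * σ x := by
  have hterm : ∀ x y, (f y - f x) ^ 2 * logMean (σ x * Q x y) (σ y * Q y x)
      ≤ (f y - f x) ^ 2 * ((σ x * Q x y + σ y * Q y x) / 2) := by
    intro x y
    rcases eq_or_ne x y with rfl | hxy
    · simp
    exact mul_le_mul_of_nonneg_left (logMean_le_add_div_two (mul_nonneg (hσ x) (hQ x y hxy))
      (mul_nonneg (hσ y) (hQ y x hxy.symm))) (sq_nonneg _)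
  have hsame : ∑ x, ∑ y, (f y - f x) ^ 2 * (σ x * Q x y)
      = ∑ x, ∑ y, Q x y * (f y - f x) ^ 2 * σ x :=
    Finset.sum_congr rfl fun x _ => Finset.sum_congr rfl fun y _ => by ring
  have hswap : ∑ x, ∑ y, (f y - f x) ^ 2 * (σ y * Q y x)
      = ∑ x, ∑ y, Q x y * (f y - f x) ^ 2 * σ x := by
    rw [Finset.sum_comm]
    exact Finset.sum_congr rfl fun x _ => Finset.sum_congr rfl fun y _ => by ring
  calc 2 * gammaOp Q σ f
      = ∑ x, ∑ y, (f y - f x) ^ 2 * logMean (σ x * Q x y) (σ y * Q y x) := by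
        rw [gammaOp]; ring
    _ ≤ ∑ x, ∑ y, (f y - f x) ^ 2 * ((σ x * Q x y + σ y * Q y x) / 2) :=
        Finset.sum_le_sum fun x _ => Finset.sum_le_sum fun y _ => hterm x y
    _ = (∑ x, ∑ y, (f y - f x) ^ 2 * (σ x * Q x y)
          + ∑ x, ∑ y, (f y - f x) ^ 2 * (σ y * Q y x)) / 2 := by
        simp only [← Finset.sum_add_distrib, Finset.sum_div]
        exact Finset.sum_congr rfl fun x _ => Finset.sum_congr rfl fun y _ => by ring
    _ = ∑ x, ∑ y, Q x y * (f y - f x) ^ 2 * σ x := by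
        rw [hsame, hswap]; ring

end DiscreteCalculus

section ODE

variable {E : Type*} [NormedAddCommGroup E] [NormedSpace ℝ E]

def IsODESolutionOn (v : ℝ → E → E) (f : ℝ → E) (a b : ℝ) : Prop :=
  ∀ r ∈ Icc a b, HasDerivWithinAt f (v r (f r)) (Icc a b) r

theorem IsODESolutionOn.piecewise {v : ℝ → E → E} {f g : ℝ → E} {a b c : ℝ}
    (hf : IsODESolutionOn v f a b) (hg : IsODESolutionOn v g b c) (hfg : f b = g b) :
    IsODESolutionOn v (fun u => if u < b then f u else g u) a c := by
  set F : ℝ → E := fun u => if u < b then f u else g u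
  have hFf : ∀ u ∈ Icc a b, F u = f u := fun u hu => by
    rcases hu.2.eq_or_lt with rfl | hlt
    · exact (if_neg (lt_irrefl u)).trans hfg.symm
    · exact if_pos hlt
  have hFg : ∀ u ∈ Icc b c, F u = g u := fun u hu => if_neg (not_lt.2 hu.1)
  -- off a closed piece, a derivative within that piece holds vacuously
  have extend : ∀ {p q : ℝ} {h : ℝ → E}, (∀ u ∈ Icc p q, F u = h u) → IsODESolutionOn v h p q →
      ∀ r, HasDerivWithinAt F (v r (F r)) (Icc p q) r := by
    intro p q h hFh hh r
    by_cases hr : r ∈ Icc p q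
    · rw [hFh r hr]
      exact (hh r hr).congr hFh (hFh r hr)
    · exact hasDerivWithinAt_iff_hasFDerivWithinAt.2
        (HasFDerivWithinAt.of_notMem_closure (by rwa [closure_Icc]))
  exact fun r _ => ((extend hFf hf r).union (extend hFg hg r)).mono Icc_subset_Icc_union_Icc

variable [CompleteSpace E] {v : ℝ → E → E} {K : ℝ≥0} {a b : ℝ}

theorem exists_isODESolutionOn_of_mul_le_half (hab : a ≤ b) (hK : K * (b - a) ≤ 1 / 2)
    (hlip : ∀ r ∈ Icc a b, LipschitzWith K (v r)) (h0 : ∀ r ∈ Icc a b, v r 0 = 0)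
    (hcont : ∀ x, ContinuousOn (v · x) (Icc a b)) (z : E) :
    ∃ f, f b = z ∧ IsODESolutionOn v f a b := by
  -- Picard–Lindelöf on the ball of radius `‖z‖` around `z`, where `‖v r x‖ ≤ 2 K ‖z‖`
  have hpl : IsPicardLindelof v (tmin := a) (tmax := b) ⟨b, hab, le_rfl⟩ z ‖z‖₊ 0
      (2 * K * ‖z‖₊) K := by
    refine ⟨fun r hr => (hlip r hr).lipschitzOnWith, fun x _ => hcont x, fun r hr x hx => ?_, ?_⟩
    · have hx' : ‖x‖ ≤ 2 * ‖z‖ := by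
        have := norm_le_norm_add_norm_sub' x z
        rw [Metric.mem_closedBall, dist_eq_norm] at hx
        push_cast at hx
        linarith
      calc ‖v r x‖ = ‖v r x - v r 0‖ := by rw [h0 r hr, sub_zero]
        _ ≤ K * ‖x - 0‖ := (hlip r hr).norm_sub_le x 0
        _ ≤ ((2 * K * ‖z‖₊ : ℝ≥0) : ℝ) := by
          push_cast
          rw [sub_zero]
          nlinarith [K.coe_nonneg]
    · simp only [sub_self, NNReal.coe_mul, NNReal.coe_ofNat, coe_nnnorm, NNReal.coe_zero, sub_zero]
      rw [max_eq_right (sub_nonneg.2 hab)]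
      nlinarith [norm_nonneg z]
  exact hpl.exists_eq_forall_mem_Icc_hasDerivWithinAt₀

theorem exists_isODESolutionOn_of_lipschitzWith (hab : a ≤ b)
    (hlip : ∀ r ∈ Icc a b, LipschitzWith K (v r)) (h0 : ∀ r ∈ Icc a b, v r 0 = 0)
    (hcont : ∀ x, ContinuousOn (v · x) (Icc a b)) (z : E) :
    ∃ f, f b = z ∧ IsODESolutionOn v f a b := by
  set δ : ℝ := 1 / (2 * K + 1)
  have hδ : 0 < δ := by positivity
  have hKδ : K * δ ≤ 1 / 2 := by
    rw [mul_one_div, div_le_iff₀ (by positivity)]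
    linarith
  -- extend the solution backwards from `b` in steps of length `δ`
  have step : ∀ n : ℕ, ∀ c ∈ Icc a b, b - c ≤ n * δ → ∃ f, f b = z ∧ IsODESolutionOn v f c b := by
    intro n
    induction n with
    | zero =>
      intro c hc hcb
      obtain rfl : c = b := le_antisymm hc.2 (by simpa using hcb)
      have hsub : Icc c c ⊆ Icc a c := Icc_subset_Icc hc.1 le_rfl
      exact exists_isODESolutionOn_of_mul_le_half le_rfl (by simp)
        (fun r hr => hlip r (hsub hr)) (fun r hr => h0 r (hsub hr))
        (fun x => (hcont x).mono hsub) z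
    | succ n ih =>
      intro c hc hcb
      set c' := max c (b - n * δ)
      have hcc' : c ≤ c' := le_max_left _ _
      have hc'b : c' ≤ b := max_le hc.2 (by simp only [sub_le_self_iff]; positivity)
      have hc'c : c' - c ≤ δ := by
        have : c' ≤ c + δ := max_le (by linarith) (by push_cast at hcb; linarith)
        linarith
      obtain ⟨g, hgb, hg⟩ :=
        ih c' ⟨hc.1.trans hcc', hc'b⟩ (by linarith [le_max_right c (b - n * δ)])
      have hsub : Icc c c' ⊆ Icc a b := Icc_subset_Icc hc.1 hc'b
      obtain ⟨f, hfc', hf⟩ := exists_isODESolutionOn_of_mul_le_half hcc'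
        ((mul_le_mul_of_nonneg_left hc'c K.coe_nonneg).trans hKδ)
        (fun r hr => hlip r (hsub hr)) (fun r hr => h0 r (hsub hr))
        (fun x => (hcont x).mono hsub) (g c')
      exact ⟨_, by simp [hc'b, hgb], hf.piecewise hg hfc'⟩
  obtain ⟨n, hn⟩ := exists_nat_ge ((b - a) / δ)
  exact step n a ⟨le_rfl, hab⟩ (by rwa [div_le_iff₀ hδ] at hn)

end ODE

theorem forall_pos_of_hasDerivAt_neg_of_eq_zero {ι : Type*} [Finite ι] {h : ι → ℝ → ℝ}
    {s t : ℝ} (hc : ∀ i, ContinuousOn (h i) (Icc s t)) (ht : ∀ i, 0 < h i t)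
    (hd : ∀ r ∈ Ioo s t, (∀ j, 0 ≤ h j r) → ∀ i, h i r = 0 → ∃ d < 0, HasDerivAt (h i) d r) :
    ∀ r ∈ Ioc s t, ∀ i, 0 < h i r := by
  intro r₁ hr₁ i₁
  by_contra! hneg
  set S := ⋃ i, Icc r₁ t ∩ h i ⁻¹' Iic 0
  have hsub : Icc r₁ t ⊆ Icc s t := Icc_subset_Icc hr₁.1.le le_rfl
  have hS : IsCompact S := isCompact_Icc.of_isClosed_subset
    (isClosed_iUnion_of_finite fun i => (hc i).mono hsub |>.preimage_isClosed_of_isClosed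
      isClosed_Icc isClosed_Iic) (iUnion_subset fun _ => inter_subset_left)
  -- `r₀` is the last time in `[r₁, t]` at which some `h i` is nonpositive
  set r₀ := sSup S
  have hr₀S : r₀ ∈ S := hS.sSup_mem ⟨r₁, mem_iUnion.2 ⟨i₁, ⟨le_rfl, hr₁.2⟩, hneg⟩⟩
  obtain ⟨i, ⟨hr₁r₀, hr₀t⟩, hi⟩ := mem_iUnion.1 hr₀S
  have hright : ∀ u ∈ Ioc r₀ t, ∀ j, 0 < h j u := by
    intro u hu j
    by_contra! hju
    exact (le_csSup hS.bddAbove (mem_iUnion.2 ⟨j, ⟨hr₁r₀.trans hu.1.le, hu.2⟩, hju⟩)).not_gt hu.1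
  have hr₀t' : r₀ < t := hr₀t.lt_of_ne fun heq => (ht i).not_ge (heq ▸ hi)
  have hnonneg : ∀ j, 0 ≤ h j r₀ := fun j =>
    ContinuousWithinAt.closure_le (by rw [closure_Ioc hr₀t'.ne]; exact ⟨le_rfl, hr₀t⟩)
      continuousWithinAt_const
      ((hc j r₀ (hsub ⟨hr₁r₀, hr₀t⟩)).mono
        (Ioc_subset_Icc_self.trans ((Icc_subset_Icc hr₁r₀ le_rfl).trans hsub)))
      fun u hu => (hright u hu j).le
  have hzero : h i r₀ = 0 := le_antisymm hi (hnonneg i)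
  obtain ⟨d, hd_neg, hderiv⟩ :=
    hd r₀ ⟨hr₁.1.trans_le hr₁r₀, hr₀t'⟩ hnonneg i hzero
  have hslope : Tendsto (slope (h i) r₀) (𝓝[Ioi r₀] r₀) (𝓝 d) :=
    (hasDerivWithinAt_iff_tendsto_slope' self_notMem_Ioi).1 hderiv.hasDerivWithinAt
  have : 0 ≤ d := ge_of_tendsto hslope <| by
    filter_upwards [Ioc_mem_nhdsGT hr₀t'] with u hu
    rw [slope_def_field, hzero, sub_zero]
    exact div_nonneg (hright u hu i).le (sub_nonneg.2 hu.1.le)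
  linarith

section AdjointHeat

variable [Fintype X]

theorem lipschitzWith_adjLapOp {Q : X → X → ℝ} {M : ℝ≥0} (hQ : ∀ x y, |Q x y| ≤ M) :
    LipschitzWith (2 * Fintype.card X * M) (adjLapOp Q) := by
  refine LipschitzWith.of_dist_le_mul fun w w' => (dist_pi_le_iff (by positivity)).2 fun x => ?_
  have hw : ∀ z, |w z - w' z| ≤ dist w w' := fun z => (Real.dist_eq _ _).symm.trans_le
    (dist_le_pi_dist w w' z)
  have hterm : ∀ y, |Q y x * (w y - w' y) - Q x y * (w x - w' x)| ≤ 2 * M * dist w w' := by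
    intro y
    calc _ ≤ |Q y x| * |w y - w' y| + |Q x y| * |w x - w' x| := by
          rw [← abs_mul, ← abs_mul]; exact abs_sub _ _
      _ ≤ M * dist w w' + M * dist w w' := by
          gcongr
          exacts [hQ y x, hw y, hQ x y, hw x]
      _ = 2 * M * dist w w' := by ring
  calc dist (adjLapOp Q w x) (adjLapOp Q w' x)
      = |∑ y, (Q y x * (w y - w' y) - Q x y * (w x - w' x))| := by
        rw [Real.dist_eq, adjLapOp, adjLapOp, ← Finset.sum_sub_distrib]
        congr 1
        exact Finset.sum_congr rfl fun y _ => by ring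
    _ ≤ ∑ _y : X, 2 * M * dist w w' := (Finset.abs_sum_le_sum_abs _ _).trans
        (Finset.sum_le_sum fun y _ => hterm y)
    _ = _ := by rw [Finset.sum_const, Finset.card_univ, nsmul_eq_mul]; push_cast; ring

theorem exists_isAdjHeatSol {Q : ℝ → X → X → ℝ} {s t : ℝ} {M : ℝ≥0} (hst : s ≤ t)
    (hQ : ∀ r ∈ Icc s t, ∀ x y, |Q r x y| ≤ M)
    (hQc : ∀ x y, ContinuousOn (Q · x y) (Icc s t)) (μ : X → ℝ) :
    ∃ σ, σ t = μ ∧ IsAdjHeatSol Q s t σ := by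
  have hlip : ∀ r ∈ Icc s t, LipschitzWith (2 * Fintype.card X * M) (-adjLapOp (Q r)) :=
    fun r hr => LipschitzWith.of_dist_le_mul fun w w' => by
      rw [Pi.neg_apply, Pi.neg_apply, dist_neg_neg]
      exact (lipschitzWith_adjLapOp (hQ r hr)).dist_le_mul w w'
  have hcont : ∀ w, ContinuousOn (fun r => -adjLapOp (Q r) w) (Icc s t) := fun w =>
    continuousOn_pi.2 fun x => by
      simp only [Pi.neg_apply, adjLapOp]
      fun_prop (disch := assumption)
  obtain ⟨σ, hσt, hσ⟩ := exists_isODESolutionOn_of_lipschitzWith hst hlip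
    (fun r _ => by ext; simp [adjLapOp]) hcont μ
  refine ⟨σ, hσt, fun x => (continuous_apply x).comp_continuousOn
    fun r hr => (hσ r hr).continuousWithinAt, fun r hr => ?_⟩
  exact hasDerivAt_pi.1 ((hσ r (Ioo_subset_Icc_self hr)).hasDerivAt (Icc_mem_nhds hr.1 hr.2))

theorem neg_adjLapOp_le_of_forall_ge {Q : X → X → ℝ} {M : ℝ≥0} {σ : X → ℝ} {β : ℝ} {x : X}
    (hQnn : ∀ y z, y ≠ z → 0 ≤ Q y z) (hQM : ∀ y z, Q y z ≤ M) (hβ : 0 ≤ β)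
    (hσ : ∀ y, -β ≤ σ y) (hσx : σ x = -β) :
    -adjLapOp Q σ x ≤ Fintype.card X * M * β := by
  have hterm : ∀ y, Q x y * σ x - Q y x * σ y ≤ M * β := by
    intro y
    rcases eq_or_ne y x with rfl | hyx
    · simp only [sub_self]; positivity
    have h1 : Q x y * σ x ≤ 0 := by
      rw [hσx]; exact mul_nonpos_of_nonneg_of_nonpos (hQnn x y hyx.symm) (by linarith)
    have h2 : -(Q y x * σ y) ≤ Q y x * β := by
      nlinarith [mul_le_mul_of_nonneg_left (hσ y) (hQnn y x hyx)]
    nlinarith [mul_le_mul_of_nonneg_right (hQM y x) hβ]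
  calc -adjLapOp Q σ x = ∑ y, (Q x y * σ x - Q y x * σ y) := by
        rw [adjLapOp, ← Finset.sum_neg_distrib]
        exact Finset.sum_congr rfl fun y _ => by ring
    _ ≤ ∑ _y : X, M * β := Finset.sum_le_sum fun y _ => hterm y
    _ = Fintype.card X * M * β := by rw [Finset.sum_const, Finset.card_univ, nsmul_eq_mul]; ring

theorem IsAdjHeatSol.nonneg {Q : ℝ → X → X → ℝ} {s t : ℝ} {M : ℝ≥0} {σ : ℝ → X → ℝ}
    (hσ : IsAdjHeatSol Q s t σ) (hQnn : ∀ r ∈ Ioo s t, ∀ x y, x ≠ y → 0 ≤ Q r x y)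
    (hQM : ∀ r ∈ Ioo s t, ∀ x y, Q r x y ≤ M) (hσt : ∀ x, 0 ≤ σ t x) :
    ∀ r ∈ Ioc s t, ∀ x, 0 ≤ σ r x := by
  set C : ℝ := Fintype.card X * M + 1
  -- at a first zero (backwards in time) of a component, its derivative is `≤ (C - 1) β - C β < 0`
  have hpos : ∀ ε > 0, ∀ r ∈ Ioc s t, ∀ x, 0 < σ r x + ε * Real.exp (C * (t - r)) := by
    intro ε hε
    have hexp : ∀ r, HasDerivAt (fun u => ε * Real.exp (C * (t - u)))
        (ε * (Real.exp (C * (t - r)) * -C)) r := fun r => by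
      simpa using (((hasDerivAt_id' r).const_sub t).const_mul C).exp.const_mul ε
    refine forall_pos_of_hasDerivAt_neg_of_eq_zero
      (h := fun x r => σ r x + ε * Real.exp (C * (t - r))) (fun x => (hσ.1 x).add (by fun_prop))
      (fun x => by simp only [sub_self, mul_zero, Real.exp_zero, mul_one]; linarith [hσt x])
      fun r hr hge x hx => ⟨_, ?_, (hσ.2 r hr x).add (hexp r)⟩
    set β := ε * Real.exp (C * (t - r))
    have hβ : 0 < β := by positivity
    have hmin := neg_adjLapOp_le_of_forall_ge (hQnn r hr) (hQM r hr) hβ.le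
      (fun y => by linarith [hge y]) (by linarith [hx] : σ r x = -β)
    have hCβ : ε * (Real.exp (C * (t - r)) * -C) = -(Fintype.card X * M * β + β) := by
      simp only [β, C]; ring
    linarith
  intro r hr x
  refine le_of_forall_pos_lt_add fun ε hε => ?_
  have := hpos (ε / Real.exp (C * (t - r))) (by positivity) r hr x
  rwa [div_mul_cancel₀ _ (Real.exp_pos _).ne'] at this

end AdjointHeat

theorem LocLipschitzOn.continuousOn {f : ℝ → ℝ} {I : Set ℝ} (h : LocLipschitzOn f I) :
    ContinuousOn f I := fun t ht => by
  obtain ⟨ε, hε, K, hK⟩ := h t ht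
  exact (hK.continuousOn t ⟨ht, Metric.mem_ball_self hε⟩).mono_of_mem_nhdsWithin
    (inter_mem_nhdsWithin I (Metric.ball_mem_nhds t hε))

section RegularTriple

variable [Fintype X] [DecidableEq X] {I : Set ℝ} {Q : ℝ → X → X → ℝ} {pm : ℝ → X → ℝ}

theorem IsRegularTriple.continuousOn_rate (hreg : IsRegularTriple I Q pm) (x y : X) :
    ContinuousOn (Q · x y) I := by
  have hoff : ∀ x y, x ≠ y → ContinuousOn (Q · x y) I := by
    intro x y hxy
    rcases hreg.2.1 x y hxy with hzero | ⟨hpos, hlip⟩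
    · exact continuousOn_const.congr hzero
    · exact (Real.continuous_exp.comp_continuousOn hlip.continuousOn).congr
        fun r hr => (Real.exp_log (hpos r hr)).symm
  rcases eq_or_ne x y with rfl | hxy
  · refine (continuousOn_finsetSum _ fun z hz => hoff x z ?_).neg.congr
      fun r hr => (hreg.1 r hr).2.1 x
    simpa [eq_comm] using hz
  · exact hoff x y hxy

theorem IsRegularTriple.exists_abs_le (hreg : IsRegularTriple I Q pm) {s t : ℝ}
    (hsub : Icc s t ⊆ I) : ∃ M : ℝ≥0, ∀ r ∈ Icc s t, ∀ x y, |Q r x y| ≤ M := by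
  have hQ : ContinuousOn Q (Icc s t) := continuousOn_pi.2 fun x => continuousOn_pi.2 fun y =>
    (hreg.continuousOn_rate x y).mono hsub
  obtain ⟨C, hC⟩ := isCompact_Icc.exists_bound_of_continuousOn hQ
  refine ⟨C.toNNReal, fun r hr x y => ?_⟩
  calc |Q r x y| = ‖Q r x y‖ := (Real.norm_eq_abs _).symm
    _ ≤ ‖Q r‖ := (norm_le_pi_norm (Q r x) y).trans (norm_le_pi_norm (Q r) x)
    _ ≤ C.toNNReal := (hC r hr).trans (Real.le_coe_toNNReal C)

end RegularTriple

theorem IsHeatSol.mono [Fintype X] {Q : ℝ → X → X → ℝ} {s t s' t' : ℝ} {ψ : ℝ → X → ℝ}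
    (hψ : IsHeatSol Q s t ψ) (hs : s ≤ s') (ht : t' ≤ t) : IsHeatSol Q s' t' ψ :=
  ⟨fun x => (hψ.1 x).mono (Icc_subset_Icc hs ht),
    fun r hr => hψ.2 r (Ioo_subset_Ioo hs ht hr)⟩

theorem IsAdjHeatSol.mono [Fintype X] {Q : ℝ → X → X → ℝ} {s t s' t' : ℝ} {σ : ℝ → X → ℝ}
    (hσ : IsAdjHeatSol Q s t σ) (hs : s ≤ s') (ht : t' ≤ t) : IsAdjHeatSol Q s' t' σ :=
  ⟨fun x => (hσ.1 x).mono (Icc_subset_Icc hs ht),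
    fun r hr => hσ.2 r (Ioo_subset_Ioo hs ht hr)⟩

theorem mul_sub_le_sub_of_hasDerivAt {f f' : ℝ → ℝ} {C a b : ℝ} (hab : a ≤ b)
    (hf : ContinuousOn f (Icc a b)) (hf' : ∀ r ∈ Ioo a b, HasDerivAt f (f' r) r)
    (hC : ∀ r ∈ Ioo a b, C ≤ f' r) : C * (b - a) ≤ f b - f a := by
  rw [← interior_Icc] at hf' hC
  exact (convex_Icc a b).mul_sub_le_image_sub_of_le_deriv hf
    (fun r hr => (hf' r hr).differentiableAt.differentiableWithinAt)
    (fun r hr => (hf' r hr).deriv ▸ hC r hr) a ⟨le_rfl, hab⟩ b ⟨hab, le_rfl⟩ hab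

theorem reverse_poincare_super_ricci_flow_general
    {X : Type*} [Fintype X] [DecidableEq X]
    (I : Set ℝ) (hIc : Set.OrdConnected I)
    (Q : ℝ → X → X → ℝ) (pm : ℝ → X → ℝ)
    (hreg : IsRegularTriple I Q pm)
    (hGE : ∀ r1 ∈ I, ∀ r2 ∈ I, r1 ≤ r2 → ∀ χ σ : ℝ → X → ℝ,
      IsHeatSol Q r1 r2 χ → IsAdjHeatSol Q r1 r2 σ → IsProb (σ r2) →
        gammaOp (Q r2) (σ r2) (χ r2) ≤ gammaOp (Q r1) (σ r1) (χ r1)) :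
    ∀ s ∈ I, ∀ t ∈ I, s ≤ t → ∀ μ : X → ℝ, IsProb μ → ∀ ψbar : X → ℝ,
      ∀ ψ χ : ℝ → X → ℝ,
        IsHeatSol Q s t ψ → ψ s = ψbar →
        IsHeatSol Q s t χ → (∀ x, χ s x = (ψbar x) ^ 2) →
        (∑ x, χ t x * μ x) - ∑ x, (ψ t x) ^ 2 * μ x ≥
          2 * (t - s) * gammaOp (Q t) μ (ψ t) := by
  intro s hs t ht hst μ hμ ψbar ψ χ hψ rfl hχ hχs
  have hsub : Icc s t ⊆ I := hIc.out hs ht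
  obtain ⟨M, hM⟩ := hreg.exists_abs_le hsub
  obtain ⟨σ, rfl, hσ⟩ :=
    exists_isAdjHeatSol hst hM (fun x y => (hreg.continuousOn_rate x y).mono hsub) μ
  have hQnn : ∀ r ∈ Ioo s t, ∀ x y, x ≠ y → 0 ≤ Q r x y :=
    fun r hr => (hreg.1 r (hsub (Ioo_subset_Icc_self hr))).1
  have hσnn := hσ.nonneg hQnn
    (fun r hr x y => (le_abs_self _).trans (hM r (Ioo_subset_Icc_self hr) x y)) hμ.1
  have hrate : ∀ r ∈ Ioo s t, 2 * gammaOp (Q t) (σ t) (ψ t)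
      ≤ ∑ x, ∑ y, Q r x y * (ψ r y - ψ r x) ^ 2 * σ r x := fun r hr =>
    calc 2 * gammaOp (Q t) (σ t) (ψ t) ≤ 2 * gammaOp (Q r) (σ r) (ψ r) := by
          gcongr
          exact hGE r (hsub (Ioo_subset_Icc_self hr)) t ht hr.2.le ψ σ
            (hψ.mono hr.1.le le_rfl) (hσ.mono hr.1.le le_rfl) hμ
      _ ≤ _ := two_mul_gammaOp_le (Q r) (hQnn r hr) (hσnn r (Ioo_subset_Ioc_self hr)) (ψ r)
  have hgrowth := mul_sub_le_sub_of_hasDerivAt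
    (f := fun u => ∑ x, (χ u x - ψ u x ^ 2) * σ u x) hst
    (continuousOn_finsetSum _ fun x _ => ((hχ.1 x).sub ((hψ.1 x).pow 2)).mul (hσ.1 x))
    (fun r hr => hasDerivAt_sum_sub_sq_mul (hχ.2 r hr) (hψ.2 r hr) (hσ.2 r hr)) hrate
  simp only [hχs, sub_self, zero_mul, Finset.sum_const_zero, sub_zero, sub_mul,
    Finset.sum_sub_distrib] at hgrowth
  linarith

/-- Reverse Poincaré inequality for discrete super Ricci flows. -/
theorem reverse_poincare_super_ricci_flow
    {X : Type*} [Fintype X] [DecidableEq X]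
    (I : Set ℝ) (hIo : IsOpen I) (hIc : Set.OrdConnected I)
    (Q : ℝ → X → X → ℝ) (pm : ℝ → X → ℝ)
    (hreg : IsRegularTriple I Q pm)
    (hGE : ∀ r1 ∈ I, ∀ r2 ∈ I, r1 ≤ r2 → ∀ χ σ : ℝ → X → ℝ,
      IsHeatSol Q r1 r2 χ → IsAdjHeatSol Q r1 r2 σ → IsProb (σ r2) →
        gammaOp (Q r2) (σ r2) (χ r2) ≤ gammaOp (Q r1) (σ r1) (χ r1)) :
    ∀ s ∈ I, ∀ t ∈ I, s ≤ t → ∀ μ : X → ℝ, IsProb μ → ∀ ψbar : X → ℝ,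
      ∀ ψ χ : ℝ → X → ℝ,
        IsHeatSol Q s t ψ → ψ s = ψbar →
        IsHeatSol Q s t χ → (∀ x, χ s x = (ψbar x) ^ 2) →
        (∑ x, χ t x * μ x) - ∑ x, (ψ t x) ^ 2 * μ x ≥
          2 * (t - s) * gammaOp (Q t) μ (ψ t) :=
  reverse_poincare_super_ricci_flow_general I hIc Q pm hreg hGE
end
end

section
/- Soliton-type super Ricci flows from entropic curvature bounds: Let (X,Q,π) be a Markov triple and κ∈ℝ, and suppose that Γ₂(μ,ψ) ≥ κ·Γ(μ,ψ) for all strictly positive μ∈P_*(X) and all ψ∈ℝ^X, where Γ and Γ₂ are the integrated carré du champ operators of (X,Q,π). Define L_t := 1/(1-2κt) for t∈I, where I=[0,1/(2κ)) if κ>0 and I=[0,∞) if κ≤0, and set Q_t := L_t·Q and π_t := π. Then the family (X,Q_t,π_t)_{t∈I} satisfies the dynamic Bochner inequality: for every t∈I, every strictly positive μ∈P_*(X) and every ψ∈ℝ^X, Γ_{2,t}(μ,ψ) ≥ (1/2)∂_tΓ_t(μ,ψ), where Γ_{2,t}, Γ_t, ∂_tΓ_t are the operators associated with the rates Q_t.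 -/
open Filter Set MeasureTheory Topology
open scoped ENNReal NNReal

noncomputable section

variable {X : Type*}

/-- Integrated iterated carré du champ operator `Γ₂(μ,ψ)`. -/
def gamma2Op [Fintype X] (Q : X → X → ℝ) (pm μ f : X → ℝ) : ℝ :=
  (1/4) * ∑ x, ∑ y, (f y - f x) ^ 2 *
      (logMeanD1 (μ x / pm x) (μ y / pm y) * lapOp Q (fun z => μ z / pm z) x +
        logMeanD2 (μ x / pm x) (μ y / pm y) * lapOp Q (fun z => μ z / pm z) y) *
      Q x y * pm x
    - (1/2) * ∑ x, ∑ y, (f y - f x) * (lapOp Q f y - lapOp Q f x) *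
        logMean (μ x * Q x y) (μ y * Q y x)

/-- Time derivative `∂ₜΓₜ(μ,ψ)` of the carré du champ operator. -/
def gammaDtOp [Fintype X] (Q : ℝ → X → X → ℝ) (t : ℝ) (μ f : X → ℝ) : ℝ :=
  (1/2) * ∑ x, ∑ y, (f y - f x) ^ 2 *
    (logMeanD1 (μ x * Q t x y) (μ y * Q t y x) * (μ x * deriv (fun r => Q r x y) t) +
      logMeanD2 (μ x * Q t x y) (μ y * Q t y x) * (μ y * deriv (fun r => Q r y x) t))

/-!
With `π_t = π` the density `ρ = μ/π` does not move, and `Q_t = L_t Q` with `L_t > 0` on `I`.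
The logarithmic mean is positively 1-homogeneous and `Δ` is linear in the rates, so
`Γ_{2,t} = L_t² Γ₂`. Euler's identity `a ∂₁Λ(a,b) + b ∂₂Λ(a,b) = Λ(a,b)` for the homogeneous
function `Λ` gives `∂_tΓ_t = L_t' Γ = 2κ L_t² Γ`, so `Γ_{2,t} ≥ ½ ∂_tΓ_t` is `L_t²` times the
static bound `Γ₂ ≥ κ Γ`.
-/

lemma logMean_comm (a b : ℝ) : logMean a b = logMean b a := by
  have h := intervalIntegral.integral_comp_sub_left (a := 0) (b := 1)
    (fun u => a ^ u * b ^ (1 - u)) 1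
  simp only [sub_zero, sub_self, sub_sub_cancel] at h
  rw [logMean, logMean, ← h]
  exact intervalIntegral.integral_congr fun u _ => mul_comm _ _

lemma logMean_zero_left (b : ℝ) : logMean 0 b = 0 := by
  rw [logMean, intervalIntegral.integral_of_le zero_le_one,
    setIntegral_congr_fun measurableSet_Ioc (g := fun _ => (0 : ℝ))
      fun u hu => by rw [Real.zero_rpow hu.1.ne', zero_mul]]
  simp

lemma logMean_zero_right (a : ℝ) : logMean a 0 = 0 := by
  rw [logMean_comm, logMean_zero_left]

lemma logMean_mul_mul {c a b : ℝ} (hc : 0 < c) (ha : 0 ≤ a) (hb : 0 ≤ b) :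
    logMean (c * a) (c * b) = c * logMean a b := by
  rw [logMean, logMean, ← intervalIntegral.integral_const_mul]
  refine intervalIntegral.integral_congr fun u _ => ?_
  simp only [Real.mul_rpow hc.le ha, Real.mul_rpow hc.le hb]
  rw [show c ^ u * a ^ u * (c ^ (1 - u) * b ^ (1 - u)) = c ^ (u + (1 - u)) * (a ^ u * b ^ (1 - u))
    by rw [Real.rpow_add hc]; ring, add_sub_cancel, Real.rpow_one]

lemma hasDerivAt_integral_rpow {s : ℝ} (hs : 0 < s) :
    HasDerivAt (fun x => ∫ α in (0 : ℝ)..1, x ^ α) (∫ α in (0 : ℝ)..1, α * s ^ (α - 1)) s := by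
  have hs2 : 0 < s / 2 := half_pos hs
  have hball : ∀ x ∈ Metric.ball s (s / 2), s / 2 ≤ x := fun x hx => by
    rw [Metric.mem_ball, Real.dist_eq, abs_sub_lt_iff] at hx; linarith
  refine (intervalIntegral.hasDerivAt_integral_of_dominated_loc_of_deriv_le
    (F' := fun x α => α * x ^ (α - 1)) (bound := fun α => (s / 2) ^ (α - 1))
    (Metric.ball_mem_nhds s hs2) ?_ ?_ ?_ ?_ ?_ ?_).2
  · filter_upwards [eventually_gt_nhds hs] with x hx
    exact (Real.continuous_const_rpow hx.ne').aestronglyMeasurable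
  · exact (Real.continuous_const_rpow hs.ne').intervalIntegrable 0 1
  · exact (continuous_id.mul ((Real.continuous_const_rpow hs.ne').comp
      (continuous_id.sub continuous_const))).aestronglyMeasurable
  · refine ae_of_all _ fun α hα x hx => ?_
    rw [uIoc_of_le zero_le_one] at hα
    have hxα : 0 < x ^ (α - 1) := Real.rpow_pos_of_pos (hs2.trans_le (hball x hx)) _
    rw [Real.norm_eq_abs, abs_of_nonneg (mul_nonneg hα.1.le hxα.le)]
    calc α * x ^ (α - 1) ≤ 1 * x ^ (α - 1) := by gcongr; exact hα.2
      _ ≤ (s / 2) ^ (α - 1) := by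
          rw [one_mul]; exact Real.rpow_le_rpow_of_nonpos hs2 (hball x hx) (by linarith [hα.2])
  · exact ((Real.continuous_const_rpow hs2.ne').comp
      (continuous_id.sub continuous_const)).intervalIntegrable 0 1
  · refine ae_of_all _ fun α _ x hx => ?_
    exact Real.hasDerivAt_rpow_const (Or.inl (hs2.trans_le (hball x hx)).ne')

lemma differentiableAt_logMean_left_one {s : ℝ} (hs : 0 < s) :
    DifferentiableAt ℝ (fun x => logMean x 1) s := by
  simpa only [logMean, Real.one_rpow, mul_one] using (hasDerivAt_integral_rpow hs).differentiableAt

lemma mul_deriv_add_mul_deriv_of_homogeneous {f : ℝ → ℝ → ℝ}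
    (hf : ∀ c a b, 0 < c → 0 < a → 0 < b → f (c * a) (c * b) = c * f a b) {a b : ℝ}
    (ha : 0 < a) (hb : 0 < b) (hd : DifferentiableAt ℝ (fun s => f s 1) (a / b)) :
    a * deriv (fun u => f u b) a + b * deriv (fun v => f a v) b = f a b := by
  set g := fun s => f s 1
  have hg : ∀ u v, 0 < u → 0 < v → f u v = v * g (u / v) := fun u v hu hv => by
    simpa [g, mul_div_cancel₀ u hv.ne'] using hf v (u / v) 1 hv (div_pos hu hv) one_pos
  have hleft : HasDerivAt (fun u => f u b) (deriv g (a / b)) a := by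
    have h := (hd.hasDerivAt.comp a ((hasDerivAt_id' a).div_const b)).const_mul b
    refine (h.congr_deriv (by field_simp)).congr_of_eventuallyEq <|
      (eventually_gt_nhds ha).mono fun u hu => hg u b hu hb
  have hright : HasDerivAt (fun v => f a v) (g (a / b) - a / b * deriv g (a / b)) b := by
    have h := (hasDerivAt_id' b).mul
      (hd.hasDerivAt.comp b ((hasDerivAt_const b a).div (hasDerivAt_id' b) hb.ne'))
    refine (h.congr_deriv (by simp only [Function.comp_apply]; field_simp; ring))
      |>.congr_of_eventuallyEq <| (eventually_gt_nhds hb).mono fun v hv => hg a v ha hv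
  rw [hleft.deriv, hright.deriv, hg a b ha hb]
  field_simp
  ring

lemma logMeanD1_zero_right (a : ℝ) : logMeanD1 a 0 = 0 := by
  simp [logMeanD1, logMean_zero_right]

lemma logMeanD2_zero_left (b : ℝ) : logMeanD2 0 b = 0 := by
  simp [logMeanD2, logMean_zero_left]

lemma mul_logMeanD1_add_mul_logMeanD2 {a b : ℝ} (ha : 0 ≤ a) (hb : 0 ≤ b) :
    a * logMeanD1 a b + b * logMeanD2 a b = logMean a b := by
  rcases ha.eq_or_lt with rfl | ha
  · simp [logMeanD2_zero_left, logMean_zero_left]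
  rcases hb.eq_or_lt with rfl | hb
  · simp [logMeanD1_zero_right, logMean_zero_right]
  exact mul_deriv_add_mul_deriv_of_homogeneous
    (fun c a b hc ha hb => logMean_mul_mul hc ha.le hb.le) ha hb
    (differentiableAt_logMean_left_one (div_pos ha hb))

section ScaledRates

variable {X : Type*} {Q : X → X → ℝ} {μ : X → ℝ}

lemma lapOp_const_mul [Fintype X] (c : ℝ) (f : X → ℝ) (x : X) :
    lapOp (fun x y => c * Q x y) f x = c * lapOp Q f x := by
  simp only [lapOp, Finset.mul_sum, mul_assoc]

lemma logMean_const_mul_rates (hQ : ∀ x y, x ≠ y → 0 ≤ Q x y) (hμ : ∀ x, 0 ≤ μ x)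
    {c : ℝ} (hc : 0 < c) {x y : X} (hxy : x ≠ y) :
    logMean (μ x * (c * Q x y)) (μ y * (c * Q y x)) = c * logMean (μ x * Q x y) (μ y * Q y x) := by
  rw [mul_left_comm (μ x), mul_left_comm (μ y), logMean_mul_mul hc
    (mul_nonneg (hμ x) (hQ x y hxy)) (mul_nonneg (hμ y) (hQ y x hxy.symm))]

lemma gamma2Op_const_mul [Fintype X] (hQ : ∀ x y, x ≠ y → 0 ≤ Q x y) (hμ : ∀ x, 0 ≤ μ x)
    {c : ℝ} (hc : 0 < c) (pm f : X → ℝ) :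
    gamma2Op (fun x y => c * Q x y) pm μ f = c ^ 2 * gamma2Op Q pm μ f := by
  have hΔρ : ∀ x y, (f y - f x) ^ 2 *
      (logMeanD1 (μ x / pm x) (μ y / pm y) * (c * lapOp Q (fun z => μ z / pm z) x) +
        logMeanD2 (μ x / pm x) (μ y / pm y) * (c * lapOp Q (fun z => μ z / pm z) y)) *
      (c * Q x y) * pm x =
      c ^ 2 * ((f y - f x) ^ 2 *
        (logMeanD1 (μ x / pm x) (μ y / pm y) * lapOp Q (fun z => μ z / pm z) x +
          logMeanD2 (μ x / pm x) (μ y / pm y) * lapOp Q (fun z => μ z / pm z) y) *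
        Q x y * pm x) := fun x y => by
    ring
  have hΔf : ∀ x y, (f y - f x) * (c * lapOp Q f y - c * lapOp Q f x) *
      logMean (μ x * (c * Q x y)) (μ y * (c * Q y x)) =
      c ^ 2 * ((f y - f x) * (lapOp Q f y - lapOp Q f x) *
        logMean (μ x * Q x y) (μ y * Q y x)) := fun x y => by
    rcases eq_or_ne x y with rfl | hxy
    · simp
    · rw [logMean_const_mul_rates hQ hμ hc hxy]; ring
  simp only [gamma2Op, lapOp_const_mul, hΔρ, hΔf, ← Finset.mul_sum]
  ring

lemma gammaDtOp_mul_of_hasDerivAt [Fintype X] (hQ : ∀ x y, x ≠ y → 0 ≤ Q x y)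
    (hμ : ∀ x, 0 ≤ μ x) {ℓ : ℝ → ℝ} {ℓ' t : ℝ} (hℓ : HasDerivAt ℓ ℓ' t) (hℓt : 0 < ℓ t)
    (f : X → ℝ) :
    gammaDtOp (fun r x y => ℓ r * Q x y) t μ f = ℓ' * gammaOp Q μ f := by
  have hderiv : ∀ x y, deriv (fun r => ℓ r * Q x y) t = ℓ' * Q x y :=
    fun x y => (hℓ.mul_const _).deriv
  have hterm : ∀ x y, (f y - f x) ^ 2 *
      (logMeanD1 (μ x * (ℓ t * Q x y)) (μ y * (ℓ t * Q y x)) * (μ x * (ℓ' * Q x y)) +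
        logMeanD2 (μ x * (ℓ t * Q x y)) (μ y * (ℓ t * Q y x)) * (μ y * (ℓ' * Q y x))) =
      ℓ' * ((f y - f x) ^ 2 * logMean (μ x * Q x y) (μ y * Q y x)) := fun x y => by
    rcases eq_or_ne x y with rfl | hxy
    · simp
    have heuler := mul_logMeanD1_add_mul_logMeanD2
      (mul_nonneg (hμ x) (mul_nonneg hℓt.le (hQ x y hxy)))
      (mul_nonneg (hμ y) (mul_nonneg hℓt.le (hQ y x hxy.symm)))
    rw [logMean_const_mul_rates hQ hμ hℓt hxy] at heuler
    apply mul_left_cancel₀ hℓt.ne'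
    linear_combination ℓ' * (f y - f x) ^ 2 * heuler
  simp only [gammaDtOp, gammaOp, hderiv, hterm, ← Finset.mul_sum]
  ring

end ScaledRates

lemma one_sub_two_mul_mul_pos {κ t : ℝ}
    (ht : t ∈ if 0 < κ then Ico (0 : ℝ) (1 / (2 * κ)) else Ici (0 : ℝ)) : 0 < 1 - 2 * κ * t := by
  split_ifs at ht with hκ
  · rw [mem_Ico, lt_div_iff₀ (by positivity)] at ht
    linarith
  · nlinarith [mem_Ici.1 ht, not_lt.1 hκ]

lemma hasDerivAt_one_div_one_sub_two_mul {κ t : ℝ} (h : 1 - 2 * κ * t ≠ 0) :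
    HasDerivAt (fun r => 1 / (1 - 2 * κ * r)) (2 * κ * (1 / (1 - 2 * κ * t)) ^ 2) t := by
  refine ((hasDerivAt_const t 1).div
    (((hasDerivAt_id' t).const_mul (2 * κ)).const_sub 1) h).congr_deriv ?_
  field_simp
  ring

/-- Soliton-type super Ricci flows from entropic curvature bounds. -/
theorem soliton_super_ricci_flow
    {X : Type*} [Fintype X] [DecidableEq X]
    (Q : X → X → ℝ) (pm : X → ℝ) (hM : IsMarkovTriple Q pm) (κ : ℝ)
    (hRic : ∀ μ : X → ℝ, IsProbPos μ → ∀ ψ : X → ℝ,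
      gamma2Op Q pm μ ψ ≥ κ * gammaOp Q μ ψ) :
    ∀ t ∈ (if 0 < κ then Set.Ico (0:ℝ) (1/(2*κ)) else Set.Ici (0:ℝ)),
      ∀ μ : X → ℝ, IsProbPos μ → ∀ ψ : X → ℝ,
        gamma2Op (fun x y => (1/(1 - 2*κ*t)) * Q x y) pm μ ψ ≥
          (1/2) * gammaDtOp (fun r x y => (1/(1 - 2*κ*r)) * Q x y) t μ ψ := by
  intro t ht μ hμ ψ
  have hL : 0 < 1 / (1 - 2 * κ * t) := one_div_pos.2 (one_sub_two_mul_mul_pos ht)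
  have hμ0 : ∀ x, 0 ≤ μ x := fun x => (hμ.1 x).le
  rw [gamma2Op_const_mul hM.1 hμ0 hL, gammaDtOp_mul_of_hasDerivAt hM.1 hμ0
    (hasDerivAt_one_div_one_sub_two_mul (one_sub_two_mul_mul_pos ht).ne') hL]
  have hscaled := mul_le_mul_of_nonneg_left (hRic μ hμ ψ) (sq_nonneg (1 / (1 - 2 * κ * t)))
  linarith
end
end
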